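/- Let (φ_λ)_{λ∈Λ}, with Λ finite, be an orthonormal basis of ℝ^n, let Λ = ⋃_{a∈K} Λ_a be a partition of Λ into pairwise disjoint nonempty subsets, let Y ∈ ℝ^n and q_a > 0 for each a ∈ K. Define the data-dependent weights w_a = q_a² / max{q_a, ‖P_a Y‖₂}. Then the block James–Stein estimator β̂ = Σ_{a∈K} Σ_{λ∈Λ_a} (η₂(P_a Y, q_a))_λ φ_λ, where η₂(x, q) = x·max(1 − q²/‖x‖₂², 0), is the unique solution of: minimize ‖β‖₂² over β ∈ ℝ^n subject to ‖P_a(Y − β)‖₂ ≤ w_a for every a ∈ K. -/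

import Mathlib

/-!
In the coordinates of `φ`, Parseval splits `‖β‖²` into the block energies `‖P_a β‖²`, and the
constraints act on one block each. On a block, with `x = P_a Y` and `m = max (1 - q² / ‖x‖²) 0`,
the point `η₂(x, q) = m • x` is the point of the ball `closedBall x (q² / max q ‖x‖)` nearest
to the origin: either the ball contains `0` (when `‖x‖ ≤ q`), or its radius is exactly
`(1 - m) ‖x‖`. Nearest points of balls satisfy `‖η‖² + ‖y - η‖² ≤ ‖y‖²` for all `y` in the
ball; summing over blocks gives `‖β̂‖² + ‖β - β̂‖² ≤ ‖β‖²` for every feasible `β`.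
-/

open scoped RealInnerProductSpace
open Function

section JamesStein

variable {E : Type*} [NormedAddCommGroup E] [InnerProductSpace ℝ E]

noncomputable def jamesStein (q : ℝ) (x : E) : E := max (1 - q ^ 2 / ‖x‖ ^ 2) 0 • x

lemma jamesStein_eq_zero_of_norm_le {q : ℝ} {x : E} (hxq : ‖x‖ ≤ q) : jamesStein q x = 0 := by
  rcases eq_or_ne x 0 with rfl | hx
  · simp [jamesStein]
  have hq : ‖x‖ ^ 2 ≤ q ^ 2 := pow_le_pow_left₀ (norm_nonneg x) hxq 2
  have : 1 ≤ q ^ 2 / ‖x‖ ^ 2 := (one_le_div (by positivity)).2 hq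
  simp [jamesStein, max_eq_right (sub_nonpos.2 this)]

lemma jamesStein_of_lt_norm {q : ℝ} (hq : 0 < q) {x : E} (hqx : q < ‖x‖) :
    jamesStein q x = (1 - q ^ 2 / ‖x‖ ^ 2) • x := by
  have : q ^ 2 / ‖x‖ ^ 2 ≤ 1 := div_le_one_of_le₀ (by gcongr) (by positivity)
  rw [jamesStein, max_eq_left (by linarith)]

lemma norm_sub_jamesStein_le {q : ℝ} (hq : 0 < q) (x : E) :
    ‖x - jamesStein q x‖ ≤ q ^ 2 / max q ‖x‖ := by
  rcases le_or_gt ‖x‖ q with hxq | hqx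
  · rw [jamesStein_eq_zero_of_norm_le hxq, sub_zero, max_eq_left hxq, sq,
      mul_div_cancel_right₀ _ hq.ne']
    exact hxq
  · rw [jamesStein_of_lt_norm hq hqx, max_eq_right hqx.le, sub_smul, one_smul, sub_sub_cancel,
      norm_smul_of_nonneg (by positivity)]
    field_simp
    rfl

lemma sq_norm_smul_add_sq_norm_sub_smul_le {m : ℝ} (hm0 : 0 ≤ m) (hm1 : m < 1) {x y : E}
    (hy : ‖x - y‖ ≤ (1 - m) * ‖x‖) : ‖m • x‖ ^ 2 + ‖y - m • x‖ ^ 2 ≤ ‖y‖ ^ 2 := by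
  set d := y - m • x
  have hxd : 0 ≤ ⟪x, d⟫ := by
    have hsub : x - y = (1 - m) • x - d := by simp only [d]; module
    -- expanding the constraint gives `‖d‖² ≤ 2 (1 - m) ⟪x, d⟫`
    have : ‖x - y‖ ^ 2 ≤ ((1 - m) * ‖x‖) ^ 2 := pow_le_pow_left₀ (norm_nonneg _) hy 2
    rw [hsub, norm_sub_sq_real, norm_smul_of_nonneg (by linarith), real_inner_smul_left] at this
    nlinarith [sq_nonneg ‖d‖]
  have hy' : y = m • x + d := by simp only [d]; abel
  rw [hy', norm_add_sq_real, real_inner_smul_left]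
  nlinarith [mul_nonneg hm0 hxd]

lemma sq_norm_jamesStein_add_sq_norm_sub_le {q : ℝ} (hq : 0 < q) {x y : E}
    (hy : ‖x - y‖ ≤ q ^ 2 / max q ‖x‖) :
    ‖jamesStein q x‖ ^ 2 + ‖y - jamesStein q x‖ ^ 2 ≤ ‖y‖ ^ 2 := by
  rcases le_or_gt ‖x‖ q with hxq | hqx
  · simp [jamesStein_eq_zero_of_norm_le hxq]
  have hx : 0 < ‖x‖ := hq.trans hqx
  rw [jamesStein_of_lt_norm hq hqx]
  have hpos : 0 < q ^ 2 / ‖x‖ ^ 2 := by positivity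
  have hle : q ^ 2 / ‖x‖ ^ 2 ≤ 1 := div_le_one_of_le₀ (by gcongr) (by positivity)
  refine sq_norm_smul_add_sq_norm_sub_smul_le (by linarith) (by linarith) ?_
  rw [max_eq_right hqx.le] at hy
  convert hy using 1
  field_simp
  ring

end JamesStein

section BlockCoeffs

variable {E Λ : Type*} [NormedAddCommGroup E] [InnerProductSpace ℝ E] [Fintype Λ]
  (φ : OrthonormalBasis Λ ℝ E)

noncomputable def blockCoeffs (s : Finset Λ) (v : E) : EuclideanSpace ℝ s :=
  WithLp.toLp 2 fun l => ⟪φ l, v⟫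

lemma norm_blockCoeffs (s : Finset Λ) (v : E) :
    ‖blockCoeffs φ s v‖ = √(∑ l ∈ s, ⟪φ l, v⟫ ^ 2) := by
  simp [blockCoeffs, EuclideanSpace.norm_eq, Finset.sum_attach s (fun l => ⟪φ l, v⟫ ^ 2)]

lemma blockCoeffs_sub (s : Finset Λ) (v w : E) :
    blockCoeffs φ s (v - w) = blockCoeffs φ s v - blockCoeffs φ s w := by
  ext l
  simp [blockCoeffs, inner_sub_right]

lemma blockCoeffs_sum_smul_blocks {K : Type*} [Fintype K] {Blk : K → Finset Λ}
    (hdisj : Pairwise (Disjoint on Blk)) (c : K → ℝ) (v : E) (a : K) :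
    blockCoeffs φ (Blk a) (∑ b, ∑ l ∈ Blk b, (⟪φ l, v⟫ * c b) • φ l) =
      c a • blockCoeffs φ (Blk a) v := by
  ext ⟨l, hl⟩
  simp only [blockCoeffs, PiLp.smul_apply, smul_eq_mul]
  rw [inner_sum, Finset.sum_eq_single a (fun b _ hba => ?_) (by simp),
    φ.orthonormal.inner_right_sum (fun l => ⟪φ l, v⟫ * c a) hl, mul_comm]
  have hlb : l ∉ Blk b := Finset.disjoint_right.1 (hdisj hba) hl
  refine inner_sum _ _ _ |>.trans (Finset.sum_eq_zero fun l' hl' => ?_)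
  rw [real_inner_smul_right, φ.orthonormal.inner_eq_zero (fun h : l = l' => hlb (h ▸ hl')),
    mul_zero]

lemma sq_norm_eq_sum_sq_norm_blockCoeffs {K : Type*} [Fintype K] {Blk : K → Finset Λ}
    (hdisj : Pairwise (Disjoint on Blk)) (hcover : ∀ l, ∃ a, l ∈ Blk a) (v : E) :
    ‖v‖ ^ 2 = ∑ a, ‖blockCoeffs φ (Blk a) v‖ ^ 2 := by
  classical
  have huniv : (Finset.univ : Finset Λ) = Finset.univ.biUnion Blk := by
    ext l; simpa using hcover l
  rw [← φ.sum_sq_inner_right, huniv, Finset.sum_biUnion (fun a _ b _ hab => hdisj hab)]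
  refine Finset.sum_congr rfl fun a _ => ?_
  rw [norm_blockCoeffs, Real.sq_sqrt (Finset.sum_nonneg fun _ _ => sq_nonneg _)]

end BlockCoeffs

theorem block_james_stein_variational_general {n : ℕ} {Λ K : Type*} [Fintype Λ] [Fintype K]
    (φ : OrthonormalBasis Λ ℝ (EuclideanSpace ℝ (Fin n)))
    (Blk : K → Finset Λ)
    (hdisj : ∀ a a' : K, a ≠ a' → Disjoint (Blk a) (Blk a'))
    (hcover : ∀ l : Λ, ∃ a : K, l ∈ Blk a)
    (Y : EuclideanSpace ℝ (Fin n)) (q : K → ℝ) (hq : ∀ a, 0 < q a)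
    -- `Pnorm a v = ‖P_a v‖₂`, the Euclidean norm of the block of coefficients of `v`
    (Pnorm : K → EuclideanSpace ℝ (Fin n) → ℝ)
    (hPnorm : ∀ (a : K) (v : EuclideanSpace ℝ (Fin n)),
      Pnorm a v = Real.sqrt (∑ l ∈ Blk a, (inner ℝ (φ l) v : ℝ) ^ 2))
    (w : K → ℝ) (hw : ∀ a : K, w a = q a ^ 2 / max (q a) (Pnorm a Y))
    (βhat : EuclideanSpace ℝ (Fin n))
    (hβhat : βhat = ∑ a : K, ∑ l ∈ Blk a,
      ((inner ℝ (φ l) Y : ℝ) * max (1 - q a ^ 2 / (Pnorm a Y) ^ 2) 0) • φ l) :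
    (∀ a : K, Pnorm a (Y - βhat) ≤ w a) ∧
    ∀ β : EuclideanSpace ℝ (Fin n),
      (∀ a : K, Pnorm a (Y - β) ≤ w a) → β ≠ βhat →
      ‖βhat‖ ^ 2 < ‖β‖ ^ 2 := by
  have hP : ∀ a v, Pnorm a v = ‖blockCoeffs φ (Blk a) v‖ := fun a v => by
    rw [hPnorm, norm_blockCoeffs]
  have hw' : ∀ a, w a = q a ^ 2 / max (q a) ‖blockCoeffs φ (Blk a) Y‖ := fun a => by rw [hw, hP]
  have hβhat' : ∀ a, blockCoeffs φ (Blk a) βhat = jamesStein (q a) (blockCoeffs φ (Blk a) Y) :=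
    fun a => by simp only [hβhat, hP, blockCoeffs_sum_smul_blocks φ hdisj, jamesStein]
  refine ⟨fun a => ?_, fun β hβ hne => ?_⟩
  · rw [hP, blockCoeffs_sub, hβhat', hw']
    exact norm_sub_jamesStein_le (hq a) _
  have hblock : ∀ a, ‖blockCoeffs φ (Blk a) βhat‖ ^ 2 + ‖blockCoeffs φ (Blk a) (β - βhat)‖ ^ 2 ≤
      ‖blockCoeffs φ (Blk a) β‖ ^ 2 := fun a => by
    rw [blockCoeffs_sub, hβhat']
    refine sq_norm_jamesStein_add_sq_norm_sub_le (hq a) ?_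
    rw [← blockCoeffs_sub, ← hP, ← hw']
    exact hβ a
  have hsum := Finset.sum_le_sum fun a (_ : a ∈ Finset.univ) => hblock a
  rw [Finset.sum_add_distrib] at hsum
  simp only [← sq_norm_eq_sum_sq_norm_blockCoeffs φ hdisj hcover] at hsum
  have hpos : 0 < ‖β - βhat‖ ^ 2 := by positivity [sub_ne_zero.2 hne]
  linarith

/-- Variational characterization of the block James–Stein estimator: for an orthonormal basis
`(φ_λ)_{λ∈Λ}` of `ℝ^n`, a partition `Λ = ⋃_{a∈K} Λ_a` into pairwise disjoint nonempty blocks,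
data `Y`, thresholds `q_a > 0` and data-dependent weights `w_a = q_a² / max{q_a, ‖P_a Y‖₂}`,
the block James–Stein estimator `β̂ = Σ_a Σ_{λ∈Λ_a} (η₂(P_a Y, q_a))_λ φ_λ`
(with `η₂(x,q) = x·max(1 − q²/‖x‖₂², 0)`) is the unique solution of:
minimize `‖β‖₂²` subject to `‖P_a(Y − β)‖₂ ≤ w_a` for all `a`. -/
theorem block_james_stein_variational {n : ℕ} {Λ K : Type*} [Fintype Λ] [Fintype K]
    (φ : OrthonormalBasis Λ ℝ (EuclideanSpace ℝ (Fin n)))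
    (Blk : K → Finset Λ)
    (hdisj : ∀ a a' : K, a ≠ a' → Disjoint (Blk a) (Blk a'))
    (hne : ∀ a : K, (Blk a).Nonempty)
    (hcover : ∀ l : Λ, ∃ a : K, l ∈ Blk a)
    (Y : EuclideanSpace ℝ (Fin n)) (q : K → ℝ) (hq : ∀ a, 0 < q a)
    -- `Pnorm a v = ‖P_a v‖₂`, the Euclidean norm of the block of coefficients of `v`
    (Pnorm : K → EuclideanSpace ℝ (Fin n) → ℝ)
    (hPnorm : ∀ (a : K) (v : EuclideanSpace ℝ (Fin n)),
      Pnorm a v = Real.sqrt (∑ l ∈ Blk a, (inner ℝ (φ l) v : ℝ) ^ 2))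
    (w : K → ℝ) (hw : ∀ a : K, w a = q a ^ 2 / max (q a) (Pnorm a Y))
    (βhat : EuclideanSpace ℝ (Fin n))
    (hβhat : βhat = ∑ a : K, ∑ l ∈ Blk a,
      ((inner ℝ (φ l) Y : ℝ) * max (1 - q a ^ 2 / (Pnorm a Y) ^ 2) 0) • φ l) :
    (∀ a : K, Pnorm a (Y - βhat) ≤ w a) ∧
    ∀ β : EuclideanSpace ℝ (Fin n),
      (∀ a : K, Pnorm a (Y - β) ≤ w a) → β ≠ βhat →
      ‖βhat‖ ^ 2 < ‖β‖ ^ 2 :=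
  block_james_stein_variational_general φ Blk hdisj hcover Y q hq Pnorm hPnorm w hw βhat hβhat
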